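/- Discrete calibration result: let w ∈ [0,1]^N with ‖w‖₁ > 0, SD(x) = 1 − 2⟨x,w⟩/(‖x‖₁+‖w‖₁) on [0,1]^N, D(y) = 2⟨y,w⟩/(‖y‖₁+‖w‖₁) on {0,1}^N, and fix a threshold a ∈ (0,1). Suppose additionally that wᵢ ≠ D*/2 for all i, where D* = max_y D(y). If (x^(l))_{l≥1} ⊂ [0,1]^N is a sequence with SD(x^(l)) → min_x SD(x), then for all sufficiently large l, the thresholded vector T_a(x^(l)) (with i-th entry 1 if x^(l)ᵢ ≥ a, else 0) satisfies D(T_a(x^(l))) = D* = max_y D(y). -/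

import Mathlib

open Filter

noncomputable section

/-- Discrete soft-Dice loss `SD(x) = 1 - 2⟨x,w⟩/(‖x‖₁ + ‖w‖₁)`. -/
def SDd {N : ℕ} (w x : Fin N → ℝ) : ℝ :=
  1 - 2 * (∑ i, x i * w i) / ((∑ i, x i) + (∑ i, w i))

/-- Discrete Dice score `D(y) = 2⟨y,w⟩/(‖y‖₁ + ‖w‖₁)`. -/
def Dd {N : ℕ} (w y : Fin N → ℝ) : ℝ :=
  2 * (∑ i, y i * w i) / ((∑ i, y i) + (∑ i, w i))

/-- The set of soft-Dice values over `[0,1]^N`. -/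
def SDdvals {N : ℕ} (w : Fin N → ℝ) : Set ℝ :=
  {v : ℝ | ∃ x : Fin N → ℝ, (∀ i, x i ∈ Set.Icc (0:ℝ) 1) ∧ v = SDd w x}

/-- The set of Dice values over `{0,1}^N`. -/
def Ddvals {N : ℕ} (w : Fin N → ℝ) : Set ℝ :=
  {v : ℝ | ∃ y : Fin N → ℝ, (∀ i, y i = 0 ∨ y i = 1) ∧ v = Dd w y}

/-!
Write `D*` for the best Dice score and `y*` for the binary vector with `y*ᵢ = 1` exactly when
`2 wᵢ > D*`. The deficit `φ(x) = D* ‖w‖₁ - ∑ᵢ xᵢ (2 wᵢ - D*)` is affine in `x`, is minimised over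
the cube `[0,1]^N` by `y*` coordinatewise, and `SD(x) = 1 - D* + φ(x) / (‖x‖₁ + ‖w‖₁)`. Comparing
with a Dice maximiser gives `φ(y*) = 0`, so `min SD = 1 - D*`, attained at `y*`. If thresholding
`x` at `a` disagrees with `y*` in coordinate `i`, then `xᵢ` is at distance at least
`min a (1 - a)` from `y*ᵢ`, so `φ(x) ≥ min a (1 - a) * |2 wᵢ - D*|`, which is positive because
`wᵢ ≠ D*/2`; hence `SD(x)` stays a fixed amount above its minimum.
-/

open Finset

namespace DiscreteDice

variable {N : ℕ} {w : Fin N → ℝ}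

def deficit (w : Fin N → ℝ) (c : ℝ) (x : Fin N → ℝ) : ℝ :=
  c * ∑ i, w i - ∑ i, x i * (2 * w i - c)

def optimalMask (w : Fin N → ℝ) (c : ℝ) : Fin N → ℝ :=
  fun i => if c < 2 * w i then 1 else 0

lemma mem_Icc_of_binary {t : ℝ} (ht : t = 0 ∨ t = 1) : t ∈ Set.Icc (0 : ℝ) 1 := by
  rcases ht with rfl | rfl <;> simp

lemma optimalMask_binary (w : Fin N → ℝ) (c : ℝ) (i : Fin N) :
    optimalMask w c i = 0 ∨ optimalMask w c i = 1 := by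
  unfold optimalMask
  split_ifs <;> simp

lemma optimalMask_mem_Icc (w : Fin N → ℝ) (c : ℝ) (i : Fin N) :
    optimalMask w c i ∈ Set.Icc (0 : ℝ) 1 :=
  mem_Icc_of_binary (optimalMask_binary w c i)

lemma Ddvals_finite (w : Fin N → ℝ) : (Ddvals w).Finite := by
  refine (Set.finite_range fun b : Fin N → Bool => Dd w fun i => if b i then 1 else 0).subset ?_
  rintro v ⟨y, hy, rfl⟩
  refine ⟨fun i => y i = 1, congrArg (Dd w) (funext fun i => ?_)⟩
  rcases hy i with h | h <;> simp [h]

lemma isGreatest_sSup_Ddvals (w : Fin N → ℝ) : IsGreatest (Ddvals w) (sSup (Ddvals w)) :=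
  have hne : (Ddvals w).Nonempty := ⟨_, fun _ => 0, fun _ => Or.inl rfl, rfl⟩
  ⟨hne.csSup_mem (Ddvals_finite w), fun _ hv => le_csSup (Ddvals_finite w).bddAbove hv⟩

lemma denom_pos (hpos : 0 < ∑ i, w i) {x : Fin N → ℝ} (hx : ∀ i, 0 ≤ x i) :
    0 < (∑ i, x i) + ∑ i, w i :=
  add_pos_of_nonneg_of_pos (sum_nonneg fun i _ => hx i) hpos

lemma Dd_eq_sub_deficit_div {y : Fin N → ℝ} (hden : (∑ i, y i) + ∑ i, w i ≠ 0) (c : ℝ) :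
    Dd w y = c - deficit w c y / ((∑ i, y i) + ∑ i, w i) := by
  have hsum : ∑ i, y i * (2 * w i - c) = 2 * ∑ i, y i * w i - c * ∑ i, y i := by
    rw [mul_sum, mul_sum, ← sum_sub_distrib]
    exact sum_congr rfl fun i _ => by ring
  rw [Dd, deficit, hsum]
  field_simp
  ring

lemma SDd_eq_add_deficit_div {x : Fin N → ℝ} (hden : (∑ i, x i) + ∑ i, w i ≠ 0) (c : ℝ) :
    SDd w x = 1 - c + deficit w c x / ((∑ i, x i) + ∑ i, w i) := by
  have h := Dd_eq_sub_deficit_div hden c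
  rw [Dd] at h
  rw [SDd, h]
  ring

lemma deficit_eq_deficit_optimalMask_add (w : Fin N → ℝ) (c : ℝ) (x : Fin N → ℝ) :
    deficit w c x =
      deficit w c (optimalMask w c) + ∑ i, (optimalMask w c i - x i) * (2 * w i - c) := by
  simp only [deficit, sub_mul, sum_sub_distrib]
  ring

lemma optimalMask_sub_mul_nonneg (w : Fin N → ℝ) (c : ℝ) {x : Fin N → ℝ} {i : Fin N}
    (hx : x i ∈ Set.Icc (0 : ℝ) 1) : 0 ≤ (optimalMask w c i - x i) * (2 * w i - c) := by
  obtain ⟨hx0, hx1⟩ := hx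
  unfold optimalMask
  split_ifs with h <;> nlinarith

lemma deficit_optimalMask_le (w : Fin N → ℝ) (c : ℝ) {x : Fin N → ℝ}
    (hx : ∀ i, x i ∈ Set.Icc (0 : ℝ) 1) : deficit w c (optimalMask w c) ≤ deficit w c x := by
  rw [deficit_eq_deficit_optimalMask_add w c x]
  exact le_add_of_nonneg_right (sum_nonneg fun i _ => optimalMask_sub_mul_nonneg w c (hx i))

lemma deficit_optimalMask_sSup_Ddvals (hpos : 0 < ∑ i, w i) :
    deficit w (sSup (Ddvals w)) (optimalMask w (sSup (Ddvals w))) = 0 := by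
  set D := sSup (Ddvals w)
  obtain ⟨⟨m, hm, hmD⟩, hDmax⟩ := isGreatest_sSup_Ddvals w
  have hm_den := denom_pos hpos fun i => (mem_Icc_of_binary (hm i)).1
  have hm_deficit : deficit w D m = 0 := by
    rw [Dd_eq_sub_deficit_div hm_den.ne' D] at hmD
    have h : deficit w D m / ((∑ i, m i) + ∑ i, w i) = 0 := by linarith
    simpa [hm_den.ne'] using h
  have hmask_den := denom_pos hpos fun i => (optimalMask_mem_Icc w D i).1
  have hmask_le : Dd w (optimalMask w D) ≤ D := hDmax ⟨_, optimalMask_binary w D, rfl⟩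
  rw [Dd_eq_sub_deficit_div hmask_den.ne' D, sub_le_self_iff, le_div_iff₀ hmask_den,
    zero_mul] at hmask_le
  exact le_antisymm
    (hm_deficit ▸ deficit_optimalMask_le w D fun i => mem_Icc_of_binary (hm i)) hmask_le

lemma Dd_optimalMask_sSup_Ddvals (hpos : 0 < ∑ i, w i) :
    Dd w (optimalMask w (sSup (Ddvals w))) = sSup (Ddvals w) := by
  have hden := denom_pos hpos fun i => (optimalMask_mem_Icc w (sSup (Ddvals w)) i).1
  rw [Dd_eq_sub_deficit_div hden.ne' (sSup (Ddvals w)), deficit_optimalMask_sSup_Ddvals hpos]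
  simp

lemma deficit_sSup_Ddvals_nonneg (hpos : 0 < ∑ i, w i) {x : Fin N → ℝ}
    (hx : ∀ i, x i ∈ Set.Icc (0 : ℝ) 1) : 0 ≤ deficit w (sSup (Ddvals w)) x :=
  deficit_optimalMask_sSup_Ddvals hpos ▸ deficit_optimalMask_le w _ hx

lemma sInf_SDdvals (hpos : 0 < ∑ i, w i) : sInf (SDdvals w) = 1 - sSup (Ddvals w) := by
  refine IsLeast.csInf_eq ⟨⟨_, optimalMask_mem_Icc w (sSup (Ddvals w)), ?_⟩, ?_⟩
  · show _ = 1 - Dd w _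
    rw [Dd_optimalMask_sSup_Ddvals hpos]
  · rintro v ⟨x, hx, rfl⟩
    have hden := denom_pos hpos fun i => (hx i).1
    rw [SDd_eq_add_deficit_div hden.ne' (sSup (Ddvals w))]
    exact le_add_of_nonneg_right (div_nonneg (deficit_sSup_Ddvals_nonneg hpos hx) hden.le)

lemma min_mul_abs_le_of_threshold_ne {a c : ℝ} (ha : a ∈ Set.Ioo (0 : ℝ) 1) {x : Fin N → ℝ}
    {i : Fin N} (hx : x i ∈ Set.Icc (0 : ℝ) 1) (hc : 2 * w i ≠ c)
    (hdis : (if a ≤ x i then (1 : ℝ) else 0) ≠ optimalMask w c i) :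
    min a (1 - a) * |2 * w i - c| ≤ (optimalMask w c i - x i) * (2 * w i - c) := by
  obtain ⟨ha0, ha1⟩ := ha
  obtain ⟨hx0, hx1⟩ := hx
  have hmin_a := min_le_left a (1 - a)
  have hmin_1a := min_le_right a (1 - a)
  have hmin_pos : 0 ≤ min a (1 - a) := le_min ha0.le (by linarith)
  unfold optimalMask at hdis ⊢
  by_cases hci : c < 2 * w i
  · have hxa : x i < a := not_le.mp fun hxa => hdis (by simp [hxa, hci])
    rw [if_pos hci, abs_of_pos (sub_pos.mpr hci)]
    nlinarith
  · have hxa : a ≤ x i := not_lt.mp fun hxa => hdis (by simp [not_le.mpr hxa, hci])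
    rw [if_neg hci, abs_of_neg (sub_neg.mpr (lt_of_le_of_ne (not_lt.mp hci) hc))]
    nlinarith

lemma threshold_eq_optimalMask_of_SDd_lt (hpos : 0 < ∑ i, w i) {a : ℝ}
    (ha : a ∈ Set.Ioo (0 : ℝ) 1) {x : Fin N → ℝ} (hx : ∀ i, x i ∈ Set.Icc (0 : ℝ) 1)
    {i : Fin N} (hi : 2 * w i ≠ sSup (Ddvals w))
    (hSD : SDd w x < 1 - sSup (Ddvals w) +
      min a (1 - a) * |2 * w i - sSup (Ddvals w)| / (N + ∑ i, w i)) :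
    (if a ≤ x i then (1 : ℝ) else 0) = optimalMask w (sSup (Ddvals w)) i := by
  set D := sSup (Ddvals w)
  by_contra hdis
  have hgap_le_deficit : min a (1 - a) * |2 * w i - D| ≤ deficit w D x := by
    rw [deficit_eq_deficit_optimalMask_add w D x, deficit_optimalMask_sSup_Ddvals hpos, zero_add]
    exact (min_mul_abs_le_of_threshold_ne ha (hx i) hi hdis).trans
      (single_le_sum (fun j _ => optimalMask_sub_mul_nonneg w D (hx j)) (mem_univ i))
  have hden := denom_pos hpos fun j => (hx j).1
  have hden_le : (∑ j, x j) + ∑ j, w j ≤ N + ∑ j, w j := by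
    gcongr
    calc ∑ j, x j ≤ ∑ _j : Fin N, (1 : ℝ) := sum_le_sum fun j _ => (hx j).2
      _ = N := by simp
  have hdeficit_div : min a (1 - a) * |2 * w i - D| / (N + ∑ j, w j) ≤
      deficit w D x / ((∑ j, x j) + ∑ j, w j) :=
    calc _ ≤ deficit w D x / (N + ∑ j, w j) := by gcongr
      _ ≤ _ := div_le_div_of_nonneg_left (deficit_sSup_Ddvals_nonneg hpos hx) hden hden_le
  rw [SDd_eq_add_deficit_div hden.ne' D] at hSD
  linarith

end DiscreteDice

open DiscreteDice in
theorem discrete_calibration_general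
    {N : ℕ} (w : Fin N → ℝ)
    (hpos : 0 < ∑ i, w i)
    (Dstar : ℝ) (hD : Dstar = sSup (Ddvals w))
    (hne : ∀ i, w i ≠ Dstar / 2)
    (a : ℝ) (ha : a ∈ Set.Ioo (0:ℝ) 1)
    (x : ℕ → Fin N → ℝ) (hx : ∀ l i, x l i ∈ Set.Icc (0:ℝ) 1)
    (hconv : Tendsto (fun l => SDd w (x l)) atTop (nhds (sInf (SDdvals w)))) :
    ∀ᶠ l in atTop,
      Dd w (fun i => if a ≤ x l i then (1:ℝ) else 0) = Dstar := by
  subst hD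
  rw [sInf_SDdvals hpos] at hconv
  have hcoord : ∀ i, ∀ᶠ l in atTop,
      (if a ≤ x l i then (1 : ℝ) else 0) = optimalMask w (sSup (Ddvals w)) i := by
    intro i
    have hi : 2 * w i ≠ sSup (Ddvals w) := fun h => hne i (by linarith)
    have hgap_pos : 0 < min a (1 - a) * |2 * w i - sSup (Ddvals w)| / (N + ∑ j, w j) := by
      have := lt_min ha.1 (sub_pos.mpr ha.2)
      have := abs_pos.mpr (sub_ne_zero.mpr hi)
      positivity
    filter_upwards [hconv.eventually_lt_const (lt_add_of_pos_right _ hgap_pos)] with l hl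
    exact threshold_eq_optimalMask_of_SDd_lt hpos ha (hx l) hi hl
  filter_upwards [eventually_all.mpr hcoord] with l hl
  rw [funext hl, Dd_optimalMask_sSup_Ddvals hpos]

theorem discrete_calibration
    {N : ℕ} (hN : 1 ≤ N) (w : Fin N → ℝ)
    (hw : ∀ i, w i ∈ Set.Icc (0:ℝ) 1) (hpos : 0 < ∑ i, w i)
    (Dstar : ℝ) (hD : Dstar = sSup (Ddvals w))
    (hne : ∀ i, w i ≠ Dstar / 2)
    (a : ℝ) (ha : a ∈ Set.Ioo (0:ℝ) 1)
    (x : ℕ → Fin N → ℝ) (hx : ∀ l i, x l i ∈ Set.Icc (0:ℝ) 1)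
    (hconv : Tendsto (fun l => SDd w (x l)) atTop (nhds (sInf (SDdvals w)))) :
    ∀ᶠ l in atTop,
      Dd w (fun i => if a ≤ x l i then (1:ℝ) else 0) = Dstar :=
  discrete_calibration_general w hpos Dstar hD hne a ha x hx hconv
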